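/- arXiv:2110.04396 — 5 statements merged into one kernel-verified Lean document; each statement's English description precedes it below -/
import Mathlib

section
/- Let (Ω, F, P) be a probability space, let m1, mk, N1, Nk be real-valued random variables with N1 ≥ 1 and Nk ≥ 1 almost surely, fix real numbers μ1 > μk with gap Δ = μ1 − μk > 0, constants σ > 0 and ξ > 0, and integers 1 ≤ t ≤ T. Define the random confidence radii C1 = σ·√(2(ξ+1)·ln t / N1) and Ck = σ·√(2(ξ+1)·ln t / Nk). Then for every event E contained in {mk + Ck ≥ m1 + C1} ∩ {Nk > 8(ξ+1)σ²·ln T / Δ²}, one has P(E) ≤ P(m1 ≤ μ1 − C1) + P(mk ≥ μk + Ck). -/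
/-!
On the event, the suboptimal arm has been observed so often that its confidence radius is
below half the gap, `2 * Ck < Δ`. If neither estimate deviates by its confidence radius,
i.e. `μ1 - C1 < m1` and `mk < μk + Ck`, then `mk + Ck < μk + 2 * Ck < μ1 < m1 + C1`, so the
suboptimal index cannot dominate. Hence the event lies in the union of the two deviation
events, and a union bound finishes.
-/

open MeasureTheory

lemma Real.log_natCast_le_log_natCast {m n : ℕ} (h : m ≤ n) :
    Real.log m ≤ Real.log n := by
  rcases Nat.eq_zero_or_pos m with rfl | hm
  · simpa using Real.log_natCast_nonneg n
  · exact Real.log_le_log (by exact_mod_cast hm) (by exact_mod_cast h)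

lemma two_mul_mul_sqrt_div_lt {σ a N Δ : ℝ} (ha : 0 ≤ a) (hΔ : 0 < Δ)
    (hN : 4 * σ ^ 2 * a / Δ ^ 2 < N) : 2 * (σ * √(a / N)) < Δ := by
  have hb : 0 ≤ 4 * σ ^ 2 * a := by positivity
  have hquot : 4 * σ ^ 2 * a / N < Δ ^ 2 := by
    rcases le_or_gt N 0 with hN0 | hN0
    · exact (div_nonpos_of_nonneg_of_nonpos hb hN0).trans_lt (by positivity)
    · rw [div_lt_iff₀ (by positivity)] at hN
      rw [div_lt_iff₀ hN0]
      linarith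
  calc 2 * (σ * √(a / N)) ≤ 2 * (|σ| * √(a / N)) := by gcongr; exact le_abs_self σ
    _ = √(4 * σ ^ 2 * a / N) := by
      rw [show 4 * σ ^ 2 * a / N = (2 * |σ|) ^ 2 * (a / N) by rw [mul_pow, sq_abs]; ring,
        Real.sqrt_mul (by positivity), Real.sqrt_sq (by positivity), mul_assoc]
    _ < Δ := (Real.sqrt_lt' hΔ).2 hquot

lemma le_sub_or_add_le_of_add_le_add {m1 mk μ1 μk c1 ck : ℝ} (h : m1 + c1 ≤ mk + ck)
    (hgap : 2 * ck < μ1 - μk) : m1 ≤ μ1 - c1 ∨ μk + ck ≤ mk := by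
  by_contra! hdev
  linarith [hdev.1, hdev.2]

theorem ucb_event_tail_bound_general {Ω : Type*} [MeasurableSpace Ω]
    (P : Measure Ω)
    (m1 mk Nk : Ω → ℝ)
    (μ1 μk Δ : ℝ) (hμ : μk < μ1) (hΔ : Δ = μ1 - μk)
    (σ ξ : ℝ) (hξ : 0 < ξ)
    (t T : ℕ) (htT : t ≤ T)
    (C1 Ck : Ω → ℝ)
    (hCk : ∀ ω, Ck ω = σ * Real.sqrt (2 * (ξ + 1) * Real.log t / Nk ω))
    (E : Set Ω)
    (hE : E ⊆ {ω | mk ω + Ck ω ≥ m1 ω + C1 ω} ∩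
      {ω | Nk ω > 8 * (ξ + 1) * σ ^ 2 * Real.log T / Δ ^ 2}) :
    P E ≤ P {ω | m1 ω ≤ μ1 - C1 ω} + P {ω | mk ω ≥ μk + Ck ω} := by
  subst hΔ
  have hlog_le := Real.log_natCast_le_log_natCast htT
  have hsub : E ⊆ {ω | m1 ω ≤ μ1 - C1 ω} ∪ {ω | mk ω ≥ μk + Ck ω} := by
    intro ω hω
    obtain ⟨hdom, hNk⟩ := hE hω
    have hradius : 2 * Ck ω < μ1 - μk := by
      rw [hCk]
      refine two_mul_mul_sqrt_div_lt (by positivity) (sub_pos.2 hμ) (lt_of_le_of_lt ?_ hNk)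
      rw [show 4 * σ ^ 2 * (2 * (ξ + 1) * Real.log t) = 8 * (ξ + 1) * σ ^ 2 * Real.log t by ring]
      gcongr
    exact le_sub_or_add_le_of_add_le_add hdom hradius
  exact (measure_mono hsub).trans (measure_union_le _ _)

/-- Abstraction of Lemma 1 (restating Auer et al.): the event that a suboptimal arm's
UCB index dominates the optimal arm's, while the suboptimal arm has already been observed
more than `8(ξ+1)σ²·ln T / Δ²` times, is bounded by the two tail probabilities. -/
theorem ucb_event_tail_bound {Ω : Type*} [MeasurableSpace Ω]
    (P : Measure Ω) [IsProbabilityMeasure P]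
    (m1 mk N1 Nk : Ω → ℝ)
    (hN1 : ∀ᵐ ω ∂P, 1 ≤ N1 ω) (hNk : ∀ᵐ ω ∂P, 1 ≤ Nk ω)
    (μ1 μk Δ : ℝ) (hμ : μk < μ1) (hΔ : Δ = μ1 - μk)
    (σ ξ : ℝ) (hσ : 0 < σ) (hξ : 0 < ξ)
    (t T : ℕ) (ht : 1 ≤ t) (htT : t ≤ T)
    (C1 Ck : Ω → ℝ)
    (hC1 : ∀ ω, C1 ω = σ * Real.sqrt (2 * (ξ + 1) * Real.log t / N1 ω))
    (hCk : ∀ ω, Ck ω = σ * Real.sqrt (2 * (ξ + 1) * Real.log t / Nk ω))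
    (E : Set Ω)
    (hE : E ⊆ {ω | mk ω + Ck ω ≥ m1 ω + C1 ω} ∩
      {ω | Nk ω > 8 * (ξ + 1) * σ ^ 2 * Real.log T / Δ ^ 2}) :
    P E ≤ P {ω | m1 ω ≤ μ1 - C1 ω} + P {ω | mk ω ≥ μk + Ck ω} :=
  ucb_event_tail_bound_general P m1 mk Nk μ1 μk Δ hμ hΔ σ ξ hξ t T htT C1 Ck hCk E hE
end

section
/- Let (Ω, F, P) be a probability space with a filtration (F_t)_{t∈ℕ} and let σ > 0. Let (Y_t)_{t≥1} be a real-valued adapted process and (ε_t)_{t≥1} a nonnegative predictable process (ε_t is F_{t−1}-measurable), and assume that for every λ > 0 and every t ≥ 1, exp(λ·Y_t) is integrable and E[exp(λ·Y_t) | F_{t−1}] ≤ exp(λ²σ²·ε_t/2) almost surely. Set Z_t = Σ_{τ=1}^{t} Y_τ and N_t = Σ_{τ=1}^{t} ε_τ. Fix t ≥ 1, ζ > 1 and D > 0 such that 1 ≤ N_t ≤ ζ^{D} almost surely, and set κ = 1/(σ²·(ζ^{1/4} + ζ^{−1/4})²). Then for every θ > 0, P(Z_t ≥ √(θ·N_t))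 ≤ ⌈D⌉·exp(−2κθ). -/
/-!
For every `λ > 0`, `exp (λ Z_t - λ² σ² N_t / 2)` is a nonnegative supermartingale started at
`1`, so its expectation is at most `1`; in `lintegral` form, through the pull-out property of
`condLExp`, the induction needs no integrability of the running products. Split the event
according to the geometric shell `[ζ^l, ζ^(l+1)]`, `l < ⌈D⌉`, containing `N_t`. On a shell
`√N_t` is pinned between `a` and `√ζ a`, and for the `λ` tuned to that shell the exponent
`λ √(θ N_t) - λ² σ² N_t / 2` stays above `2κθ`; Markov's inequality bounds the shell's
probability by `exp (-2κθ)`, and a union bound concludes.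
-/

open MeasureTheory
open scoped ENNReal

lemma lintegral_mul_condLExp {Ω : Type*} {m m0 : MeasurableSpace Ω} (hm : m ≤ m0)
    (P : Measure[m0] Ω) [SigmaFinite (P.trim hm)] {X : Ω → ℝ≥0∞} (hX : AEMeasurable X P)
    {g : Ω → ℝ≥0∞} (hg : Measurable[m] g) :
    ∫⁻ ω, g ω * P⁻[X|m] ω ∂P = ∫⁻ ω, g ω * X ω ∂P := by
  have hcond : Measurable P⁻[X|m] := measurable_condLExp' m P X
  refine Measurable.ennreal_induction (mα := m) (fun c s hs => ?_)
    (fun f g _ hf hg ihf ihg => ?_) (fun f hf hmono ihf => ?_) hg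
  · simp only [← Set.indicator_mul_left]
    rw [lintegral_indicator (hm s hs), lintegral_indicator (hm s hs),
      lintegral_const_mul _ hcond, lintegral_const_mul'' _ hX.restrict,
      setLIntegral_condLExp hm P X hs]
  · have hf' : Measurable f := hf.mono hm le_rfl
    simp only [Pi.add_apply, add_mul]
    rw [lintegral_add_left (f := fun ω => f ω * _) (hf'.mul hcond),
      lintegral_add_left' (f := fun ω => f ω * _) (hf'.aemeasurable.mul hX), ihf, ihg]
  · have hf' (n : ℕ) : AEMeasurable (f n) P := ((hf n).mono hm le_rfl).aemeasurable
    have hmono' (V : Ω → ℝ≥0∞) : ∀ᵐ ω ∂P, Monotone fun n => f n ω * V ω :=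
      ae_of_all _ fun ω n k hnk => mul_le_mul_left (hmono hnk ω) _
    simp only [ENNReal.iSup_mul]
    rw [lintegral_iSup' (f := fun n ω => f n ω * _) (fun n => (hf' n).mul hcond.aemeasurable)
        (hmono' _),
      lintegral_iSup' (f := fun n ω => f n ω * _) (fun n => (hf' n).mul hX) (hmono' _)]
    simp only [ihf]

lemma lintegral_mul_ofReal_le_of_condExp_le {Ω : Type*} {m m0 : MeasurableSpace Ω} (hm : m ≤ m0)
    {P : Measure[m0] Ω} [SigmaFinite (P.trim hm)] {g : Ω → ℝ≥0∞} (hg : Measurable[m] g)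
    {f h : Ω → ℝ} (hf : Integrable f P) (hf_nonneg : 0 ≤ᵐ[P] f) (hfh : P[f|m] ≤ᵐ[P] h) :
    ∫⁻ ω, g ω * ENNReal.ofReal (f ω) ∂P ≤ ∫⁻ ω, g ω * ENNReal.ofReal (h ω) ∂P :=
  calc ∫⁻ ω, g ω * ENNReal.ofReal (f ω) ∂P
      = ∫⁻ ω, g ω * P⁻[fun ω ↦ ENNReal.ofReal (f ω)|m] ω ∂P :=
        (lintegral_mul_condLExp hm P hf.aemeasurable.ennreal_ofReal hg).symm
    _ ≤ ∫⁻ ω, g ω * ENNReal.ofReal (h ω) ∂P := by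
        refine lintegral_mono_ae ?_
        filter_upwards [condLExp_ofReal m hf hf_nonneg, hfh] with ω hω hω'
        rw [hω]
        gcongr

lemma stronglyMeasurable_sum_Icc_of_adapted {Ω : Type*} {m0 : MeasurableSpace Ω}
    (ℱ : Filtration ℕ m0) (X : ℕ → Ω → ℝ) (k : ℕ)
    (hX : ∀ τ, 1 ≤ τ → StronglyMeasurable[ℱ (τ - k)] (X τ)) (t : ℕ) :
    StronglyMeasurable[ℱ t] fun ω ↦ ∑ τ ∈ Finset.Icc 1 t, X τ ω :=
  Finset.stronglyMeasurable_fun_sum _ fun τ hτ ↦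
    (hX τ (Finset.mem_Icc.1 hτ).1).mono (ℱ.mono (by grind))

lemma lintegral_exp_sum_le_one {Ω : Type*} {m0 : MeasurableSpace Ω}
    (P : Measure Ω) [IsProbabilityMeasure P] (ℱ : Filtration ℕ m0)
    (σ : ℝ) (Y ε : ℕ → Ω → ℝ)
    (hY_adapted : ∀ t, 1 ≤ t → StronglyMeasurable[ℱ t] (Y t))
    (hε_pred : ∀ t, 1 ≤ t → StronglyMeasurable[ℱ (t - 1)] (ε t))
    {lam : ℝ} (hint : ∀ t, 1 ≤ t → Integrable (fun ω => Real.exp (lam * Y t ω)) P)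
    (hmgf : ∀ t, 1 ≤ t → ∀ᵐ ω ∂P,
      (P[fun ω => Real.exp (lam * Y t ω)|ℱ (t - 1)]) ω ≤
        Real.exp (lam ^ 2 * σ ^ 2 * ε t ω / 2)) (t : ℕ) :
    ∫⁻ ω, ENNReal.ofReal (Real.exp (lam * ∑ τ ∈ Finset.Icc 1 t, Y τ ω -
      lam ^ 2 * σ ^ 2 / 2 * ∑ τ ∈ Finset.Icc 1 t, ε τ ω)) ∂P ≤ 1 := by
  induction t with
  | zero => simp
  | succ t ih =>
    set S : Ω → ℝ := fun ω ↦ lam * ∑ τ ∈ Finset.Icc 1 t, Y τ ω -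
      lam ^ 2 * σ ^ 2 / 2 * ∑ τ ∈ Finset.Icc 1 t, ε τ ω
    have hS : StronglyMeasurable[ℱ t] S :=
      ((stronglyMeasurable_sum_Icc_of_adapted ℱ Y 0 hY_adapted t).const_mul _).sub
        ((stronglyMeasurable_sum_Icc_of_adapted ℱ ε 1 hε_pred t).const_mul _)
    have hε : StronglyMeasurable[ℱ t] (ε (t + 1)) := hε_pred (t + 1) (by omega)
    have hg : Measurable[ℱ t] fun ω ↦
        ENNReal.ofReal (Real.exp (S ω - lam ^ 2 * σ ^ 2 * ε (t + 1) ω / 2)) :=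
      (hS.measurable.sub (hε.measurable.const_mul _ |>.div_const _)).exp.ennreal_ofReal
    calc _ = ∫⁻ ω, ENNReal.ofReal (Real.exp (S ω - lam ^ 2 * σ ^ 2 * ε (t + 1) ω / 2)) *
          ENNReal.ofReal (Real.exp (lam * Y (t + 1) ω)) ∂P := by
          refine lintegral_congr fun ω ↦ ?_
          rw [← ENNReal.ofReal_mul (Real.exp_nonneg _), ← Real.exp_add,
            Finset.sum_Icc_succ_top (by omega), Finset.sum_Icc_succ_top (by omega)]
          congr 2
          simp only [S]
          ring
      _ ≤ ∫⁻ ω, ENNReal.ofReal (Real.exp (S ω - lam ^ 2 * σ ^ 2 * ε (t + 1) ω / 2)) *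
          ENNReal.ofReal (Real.exp (lam ^ 2 * σ ^ 2 * ε (t + 1) ω / 2)) ∂P :=
        lintegral_mul_ofReal_le_of_condExp_le (ℱ.le t) hg (hint (t + 1) (by omega))
          (ae_of_all _ fun _ ↦ Real.exp_nonneg _) (hmgf (t + 1) (by omega))
      _ = ∫⁻ ω, ENNReal.ofReal (Real.exp (S ω)) ∂P := by
          refine lintegral_congr fun ω ↦ ?_
          rw [← ENNReal.ofReal_mul (Real.exp_nonneg _), ← Real.exp_add, sub_add_cancel]
      _ ≤ 1 := ih

lemma le_chernoff_exponent {c a q s u : ℝ} (hc : 0 < c) (ha : 0 < a) (hau : a ≤ u)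
    (huq : u ≤ q * a) :
    2 * q * s ^ 2 / (c * (1 + q) ^ 2) ≤
      2 * s / (c * a * (1 + q)) * (s * u) - (2 * s / (c * a * (1 + q))) ^ 2 * c * u ^ 2 / 2 := by
  have hq : 0 < 1 + q := by nlinarith
  have key : 2 * s / (c * a * (1 + q)) * (s * u) - (2 * s / (c * a * (1 + q))) ^ 2 * c * u ^ 2 / 2
      - 2 * q * s ^ 2 / (c * (1 + q) ^ 2)
      = (2 * s / (c * a * (1 + q))) ^ 2 * c / 2 * ((u - a) * (q * a - u)) := by
    field_simp
    ring
  have : 0 ≤ (2 * s / (c * a * (1 + q))) ^ 2 * c / 2 * ((u - a) * (q * a - u)) :=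
    mul_nonneg (by positivity) (mul_nonneg (by linarith) (by linarith))
  linarith

lemma one_div_mul_rpow_quarter_add_rpow_neg_quarter_sq {ζ : ℝ} (hζ : 0 < ζ) (σ : ℝ) :
    1 / (σ ^ 2 * (ζ ^ ((1 : ℝ) / 4) + ζ ^ (-(1 : ℝ) / 4)) ^ 2) =
      √ζ / (σ ^ 2 * (1 + √ζ) ^ 2) := by
  have hp : 0 < ζ ^ ((1 : ℝ) / 4) := Real.rpow_pos_of_pos hζ _
  have hneg : ζ ^ (-(1 : ℝ) / 4) = (ζ ^ ((1 : ℝ) / 4))⁻¹ := by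
    rw [neg_div, Real.rpow_neg hζ.le]
  have hsqrt : √ζ = (ζ ^ ((1 : ℝ) / 4)) ^ 2 := by
    rw [Real.sqrt_eq_rpow, ← Real.rpow_natCast, ← Real.rpow_mul hζ.le]
    norm_num
  rw [hneg, hsqrt]
  field_simp
  ring

lemma measure_le_exp_neg_of_lintegral_exp_le_one {Ω : Type*} [MeasurableSpace Ω]
    {P : Measure Ω} {X : Ω → ℝ} (hX : AEMeasurable X P)
    (h : ∫⁻ ω, ENNReal.ofReal (Real.exp (X ω)) ∂P ≤ 1) {A : Set Ω} {r : ℝ}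
    (hA : ∀ ω ∈ A, r ≤ X ω) : P A ≤ ENNReal.ofReal (Real.exp (-r)) :=
  calc P A ≤ ∫⁻ ω, ENNReal.ofReal (Real.exp (-r + X ω)) ∂P :=
        meas_le_lintegral₀ (hX.const_add _).exp.ennreal_ofReal fun ω hω ↦
          ENNReal.one_le_ofReal.2 (Real.one_le_exp (by linarith [hA ω hω]))
    _ = ENNReal.ofReal (Real.exp (-r)) * ∫⁻ ω, ENNReal.ofReal (Real.exp (X ω)) ∂P := by
        simp only [Real.exp_add, ENNReal.ofReal_mul (Real.exp_nonneg _)]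
        exact lintegral_const_mul' _ _ ENNReal.ofReal_ne_top
    _ ≤ ENNReal.ofReal (Real.exp (-r)) := mul_le_of_le_one_right' h

lemma measure_inter_shell_le {Ω : Type*} [MeasurableSpace Ω] {P : Measure Ω} {σ ζ θ : ℝ}
    (hσ : 0 < σ) (hζ : 0 < ζ) (hθ : 0 < θ) {Z N : Ω → ℝ} (hZ : AEMeasurable Z P)
    (hN : AEMeasurable N P)
    (hexp : ∀ lam : ℝ, 0 < lam →
      ∫⁻ ω, ENNReal.ofReal (Real.exp (lam * Z ω - lam ^ 2 * σ ^ 2 / 2 * N ω)) ∂P ≤ 1) (l : ℕ) :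
    P ({ω | Z ω ≥ √(θ * N ω)} ∩ {ω | ζ ^ l ≤ N ω ∧ N ω ≤ ζ ^ (l + 1)}) ≤
      ENNReal.ofReal (Real.exp (-2 * (√ζ / (σ ^ 2 * (1 + √ζ) ^ 2)) * θ)) := by
  set a := √(ζ ^ l)
  have ha : 0 < a := Real.sqrt_pos.2 (pow_pos hζ l)
  -- the paper's `λ_{l+1} = (2/σ) √(κθ / ζ^(l+1/2))`
  set lam := 2 * √θ / (σ ^ 2 * a * (1 + √ζ))
  have hlam : 0 < lam := by positivity
  rw [neg_mul, neg_mul]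
  refine measure_le_exp_neg_of_lintegral_exp_le_one
    ((hZ.const_mul lam).sub (hN.const_mul _)) (hexp lam hlam) ?_
  rintro ω ⟨hZN, hlo, hhi⟩
  have hau : a ≤ √(N ω) := Real.sqrt_le_sqrt hlo
  have huq : √(N ω) ≤ √ζ * a := by
    calc √(N ω) ≤ √(ζ ^ (l + 1)) := Real.sqrt_le_sqrt hhi
      _ = √ζ * a := by rw [pow_succ', Real.sqrt_mul hζ.le]
  have hN0 : 0 ≤ N ω := (pow_pos hζ l).le.trans hlo
  have hsu : √θ * √(N ω) ≤ Z ω := by rwa [← Real.sqrt_mul hθ.le]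
  have hexponent := le_chernoff_exponent (s := √θ) (pow_pos hσ 2) ha hau huq
  rw [Real.sq_sqrt hθ.le, Real.sq_sqrt hN0] at hexponent
  show 2 * _ * θ ≤ lam * Z ω - lam ^ 2 * σ ^ 2 / 2 * N ω
  calc 2 * (√ζ / (σ ^ 2 * (1 + √ζ) ^ 2)) * θ = 2 * √ζ * θ / (σ ^ 2 * (1 + √ζ) ^ 2) := by ring
    _ ≤ lam * (√θ * √(N ω)) - lam ^ 2 * σ ^ 2 * N ω / 2 := hexponent
    _ ≤ lam * Z ω - lam ^ 2 * σ ^ 2 / 2 * N ω := by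
        linarith [mul_le_mul_of_nonneg_left hsu hlam.le]

lemma exists_pow_le_le_pow_succ {ζ x : ℝ} (hζ : 1 < ζ) (hx : 1 ≤ x) {L : ℕ} (hL : 0 < L)
    (hxL : x ≤ ζ ^ L) : ∃ l < L, ζ ^ l ≤ x ∧ x ≤ ζ ^ (l + 1) := by
  obtain ⟨n, hnx, hxn⟩ := exists_nat_pow_near hx hζ
  refine ⟨min n (L - 1), by omega, (pow_le_pow_right₀ hζ.le (min_le_left _ _)).trans hnx, ?_⟩
  rcases le_total n (L - 1) with h | h
  · rw [min_eq_left h]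
    exact hxn.le
  · rwa [min_eq_right h, Nat.sub_add_cancel hL]

lemma measure_le_sum_measure_inter_shell {Ω : Type*} [MeasurableSpace Ω] {P : Measure Ω}
    {N : Ω → ℝ} {ζ D : ℝ} (hζ : 1 < ζ) (hD : 0 < D) (hN : ∀ᵐ ω ∂P, 1 ≤ N ω ∧ N ω ≤ ζ ^ D)
    (A : Set Ω) :
    P A ≤ ∑ l ∈ Finset.range ⌈D⌉₊, P (A ∩ {ω | ζ ^ l ≤ N ω ∧ N ω ≤ ζ ^ (l + 1)}) := by
  refine (measure_mono_ae ?_).trans (measure_biUnion_finset_le _ _)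
  filter_upwards [hN] with ω ⟨hN1, hND⟩ hω
  have hNL : N ω ≤ ζ ^ ⌈D⌉₊ := by
    rw [← Real.rpow_natCast]
    exact hND.trans (Real.rpow_le_rpow_of_exponent_le hζ.le (Nat.le_ceil D))
  obtain ⟨l, hl, hlo, hhi⟩ := exists_pow_le_le_pow_succ hζ hN1 (Nat.ceil_pos.2 hD) hNL
  exact Set.mem_biUnion (Finset.mem_range.2 hl) ⟨hω, hlo, hhi⟩

theorem self_normalized_peeling_bound_general {Ω : Type*} [m0 : MeasurableSpace Ω]
    (P : Measure Ω) [IsProbabilityMeasure P] (ℱ : Filtration ℕ m0)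
    (σ : ℝ) (hσ : 0 < σ)
    (Y ε : ℕ → Ω → ℝ)
    (hY_adapted : ∀ t, 1 ≤ t → StronglyMeasurable[ℱ t] (Y t))
    (hε_pred : ∀ t, 1 ≤ t → StronglyMeasurable[ℱ (t - 1)] (ε t))
    (hint : ∀ lam : ℝ, 0 < lam → ∀ t, 1 ≤ t →
      Integrable (fun ω => Real.exp (lam * Y t ω)) P)
    (hmgf : ∀ lam : ℝ, 0 < lam → ∀ t, 1 ≤ t → ∀ᵐ ω ∂P,
      (P[fun ω => Real.exp (lam * Y t ω)|ℱ (t - 1)]) ω ≤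
        Real.exp (lam ^ 2 * σ ^ 2 * ε t ω / 2))
    (Z N : ℕ → Ω → ℝ)
    (hZ : ∀ t ω, Z t ω = ∑ τ ∈ Finset.Icc 1 t, Y τ ω)
    (hN : ∀ t ω, N t ω = ∑ τ ∈ Finset.Icc 1 t, ε τ ω)
    (t : ℕ) (ζ D : ℝ) (hζ : 1 < ζ) (hD : 0 < D)
    (hNt : ∀ᵐ ω ∂P, 1 ≤ N t ω ∧ N t ω ≤ ζ ^ D)
    (κ : ℝ)
    (hκ : κ = 1 / (σ ^ 2 * (ζ ^ ((1 : ℝ) / 4) + ζ ^ (-(1 : ℝ) / 4)) ^ 2)) :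
    ∀ θ : ℝ, 0 < θ →
      P {ω | Z t ω ≥ Real.sqrt (θ * N t ω)} ≤
        ENNReal.ofReal ((⌈D⌉₊ : ℝ) * Real.exp (-2 * κ * θ)) := by
  intro θ hθ
  have hζ0 : 0 < ζ := one_pos.trans hζ
  rw [one_div_mul_rpow_quarter_add_rpow_neg_quarter_sq hζ0] at hκ
  have hZm : AEMeasurable (Z t) P := funext (hZ t) ▸
    ((stronglyMeasurable_sum_Icc_of_adapted ℱ Y 0 hY_adapted t).mono (ℱ.le t)).aemeasurable
  have hNm : AEMeasurable (N t) P := funext (hN t) ▸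
    ((stronglyMeasurable_sum_Icc_of_adapted ℱ ε 1 hε_pred t).mono (ℱ.le t)).aemeasurable
  have hexp : ∀ lam : ℝ, 0 < lam → ∫⁻ ω, ENNReal.ofReal
      (Real.exp (lam * Z t ω - lam ^ 2 * σ ^ 2 / 2 * N t ω)) ∂P ≤ 1 := fun lam hlam ↦ by
    simpa only [hZ, hN] using
      lintegral_exp_sum_le_one P ℱ σ Y ε hY_adapted hε_pred (hint lam hlam) (hmgf lam hlam) t
  calc P {ω | Z t ω ≥ √(θ * N t ω)}
      ≤ ∑ l ∈ Finset.range ⌈D⌉₊, P ({ω | Z t ω ≥ √(θ * N t ω)} ∩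
          {ω | ζ ^ l ≤ N t ω ∧ N t ω ≤ ζ ^ (l + 1)}) :=
        measure_le_sum_measure_inter_shell hζ hD hNt _
    _ ≤ ∑ l ∈ Finset.range ⌈D⌉₊, ENNReal.ofReal (Real.exp (-2 * κ * θ)) :=
        Finset.sum_le_sum fun l _ ↦ hκ ▸ measure_inter_shell_le hσ hζ0 hθ hZm hNm hexp l
    _ = ENNReal.ofReal ((⌈D⌉₊ : ℝ) * Real.exp (-2 * κ * θ)) := by
        rw [Finset.sum_const, Finset.card_range, nsmul_eq_mul,
          ENNReal.ofReal_mul (Nat.cast_nonneg _), ENNReal.ofReal_natCast]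

/-- Self-normalized concentration bound from the proof of Lemma 3, obtained by peeling
the random observation count `N_t` over geometric ranges `[ζ^{l−1}, ζ^l]`. -/
theorem self_normalized_peeling_bound {Ω : Type*} [m0 : MeasurableSpace Ω]
    (P : Measure Ω) [IsProbabilityMeasure P] (ℱ : Filtration ℕ m0)
    (σ : ℝ) (hσ : 0 < σ)
    (Y ε : ℕ → Ω → ℝ)
    (hY_adapted : ∀ t, 1 ≤ t → StronglyMeasurable[ℱ t] (Y t))
    (hε_pred : ∀ t, 1 ≤ t → StronglyMeasurable[ℱ (t - 1)] (ε t))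
    (hε_nonneg : ∀ t, 1 ≤ t → ∀ ω, 0 ≤ ε t ω)
    (hint : ∀ lam : ℝ, 0 < lam → ∀ t, 1 ≤ t →
      Integrable (fun ω => Real.exp (lam * Y t ω)) P)
    (hmgf : ∀ lam : ℝ, 0 < lam → ∀ t, 1 ≤ t → ∀ᵐ ω ∂P,
      (P[fun ω => Real.exp (lam * Y t ω)|ℱ (t - 1)]) ω ≤
        Real.exp (lam ^ 2 * σ ^ 2 * ε t ω / 2))
    (Z N : ℕ → Ω → ℝ)
    (hZ : ∀ t ω, Z t ω = ∑ τ ∈ Finset.Icc 1 t, Y τ ω)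
    (hN : ∀ t ω, N t ω = ∑ τ ∈ Finset.Icc 1 t, ε τ ω)
    (t : ℕ) (ht : 1 ≤ t) (ζ D : ℝ) (hζ : 1 < ζ) (hD : 0 < D)
    (hNt : ∀ᵐ ω ∂P, 1 ≤ N t ω ∧ N t ω ≤ ζ ^ D)
    (κ : ℝ)
    (hκ : κ = 1 / (σ ^ 2 * (ζ ^ ((1 : ℝ) / 4) + ζ ^ (-(1 : ℝ) / 4)) ^ 2)) :
    ∀ θ : ℝ, 0 < θ →
      P {ω | Z t ω ≥ Real.sqrt (θ * N t ω)} ≤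
        ENNReal.ofReal ((⌈D⌉₊ : ℝ) * Real.exp (-2 * κ * θ)) :=
  self_normalized_peeling_bound_general (m0 := m0) P ℱ σ hσ Y ε hY_adapted hε_pred hint hmgf Z N hZ
    hN t ζ D hζ hD hNt κ hκ
end

section
/- Let (Ω, F, P) be a probability space with a filtration (F_t)_{t∈ℕ} and let σ > 0, ξ > 0, ζ > 1, and let d ≥ 0 be an integer. Let (Y_t)_{t≥1} be a real-valued adapted process and (ε_t)_{t≥1} a nonnegative predictable process, and assume that for every λ > 0 and every t ≥ 1, exp(λ·Y_t) is integrable and E[exp(λ·Y_t) | F_{t−1}] ≤ exp(λ²σ²·ε_t/2) almost surely. Set Z_t = Σ_{τ=1}^{t} Y_τ and N_t = Σ_{τ=1}^{t} ε_τ, and fix an integer t ≥ 2 such that 1 ≤ N_t ≤ (d+1)·t almost surely. Then P(Z_t ≥ √(2(ξ+1)σ²·ln t · N_t)) ≤ ⌈ln((d+1)·t)/ln ζ⌉ · t^{−(ξ+1)(1−(ζ−1)²/16)}. -/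
/-!
For every `λ > 0` the conditional moment bound makes `exp (λ Z_s - λ² σ² N_s / 2)` a nonnegative
supermartingale, so its expectation is at most `1`. Peel the range `1 ≤ N_t ≤ ζ ^ K`,
`K = ⌈log_ζ ((d + 1) t)⌉`, into the `K` slices `ζ ^ k ≤ N_t ≤ ζ ^ (k + 1)`. On one slice, Markov's
inequality with a `λ` adapted to the slice bounds the probability of `Z_t ≥ √(θ N_t)` by
`exp (-θ / (2σ²) · 4 √ζ / (√ζ + 1)²)`; with `θ = 2σ² (ξ + 1) ln t` and
`4 √ζ / (√ζ + 1)² ≥ 1 - (ζ - 1)² / 16` this is at most `t ^ (-(ξ + 1) (1 - (ζ - 1)² / 16))`,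
and a union bound over the slices concludes.
-/

open MeasureTheory Real

theorem one_sub_sq_div_sixteen_le {ζ : ℝ} (hζ : 1 ≤ ζ) :
    1 - (ζ - 1) ^ 2 / 16 ≤ 4 * √ζ / (√ζ + 1) ^ 2 := by
  obtain ⟨s, hs1, rfl⟩ : ∃ s : ℝ, 1 ≤ s ∧ ζ = s ^ 2 :=
    ⟨√ζ, one_le_sqrt.2 hζ, (sq_sqrt (by linarith)).symm⟩
  rw [sqrt_sq (by linarith), le_div_iff₀ (by positivity)]
  have h16 : (16 : ℝ) ≤ (s + 1) ^ 4 := by nlinarith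
  -- (s + 1)² - 4s = (s - 1)² ≤ (s² - 1)² (s + 1)² / 16 since (s + 1)⁴ ≥ 16
  nlinarith [mul_nonneg (sq_nonneg (s - 1)) (sub_nonneg.2 h16)]

theorem exists_pow_le_and_le_pow_succ {ζ x : ℝ} {K : ℕ} (hK : 0 < K) (hx : 1 ≤ x)
    (hxK : x ≤ ζ ^ K) : ∃ k < K, ζ ^ k ≤ x ∧ x ≤ ζ ^ (k + 1) := by
  induction K, hK using Nat.le_induction with
  | base => exact ⟨0, one_pos, by simpa using hx, by simpa using hxK⟩
  | succ K hK ih =>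
    by_cases h : x ≤ ζ ^ K
    · obtain ⟨k, hk, hk'⟩ := ih h
      exact ⟨k, by omega, hk'⟩
    · exact ⟨K, K.lt_succ_self, (not_le.1 h).le, hxK⟩

theorem le_pow_ceil_logb {ζ x : ℝ} (hζ : 1 < ζ) (hx : 0 < x) : x ≤ ζ ^ ⌈logb ζ x⌉₊ := by
  calc x = ζ ^ logb ζ x := (rpow_logb (by linarith) hζ.ne' hx).symm
    _ ≤ ζ ^ (⌈logb ζ x⌉₊ : ℝ) := rpow_le_rpow_of_exponent_le hζ.le (Nat.le_ceil _)
    _ = ζ ^ ⌈logb ζ x⌉₊ := rpow_natCast ζ _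

theorem exp_neg_mul_log_le_rpow {t ξ ζ : ℝ} (ht : 1 ≤ t) (hξ : 0 ≤ ξ + 1) (hζ : 1 ≤ ζ) :
    exp (-((ξ + 1) * log t) * (4 * √ζ / (√ζ + 1) ^ 2)) ≤
      t ^ (-(ξ + 1) * (1 - (ζ - 1) ^ 2 / 16)) := by
  rw [rpow_def_of_pos (by linarith), exp_le_exp]
  nlinarith [mul_le_mul_of_nonneg_left (one_sub_sq_div_sixteen_le hζ)
    (mul_nonneg hξ (log_nonneg ht))]

theorem chernoff_exponent_le {σ v r s u : ℝ} (hσ : 0 < σ) (hr : 0 < r) (hs : 0 ≤ s)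
    (hru : r ≤ u) (hus : u ≤ s * r) :
    let lam := 2 * v / (σ ^ 2 * r * (s + 1))
    2 * v ^ 2 * s / (σ ^ 2 * (s + 1) ^ 2) ≤ lam * (v * u) - lam ^ 2 * σ ^ 2 / 2 * u ^ 2 := by
  intro lam
  -- `lam` makes the concave quadratic in `u` take the same value at `u = r` and `u = s * r`
  have hgap : lam * (v * u) - lam ^ 2 * σ ^ 2 / 2 * u ^ 2 - 2 * v ^ 2 * s / (σ ^ 2 * (s + 1) ^ 2)
      = 2 * v ^ 2 / (σ ^ 2 * r ^ 2 * (s + 1) ^ 2) * ((u - r) * (s * r - u)) := by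
    simp only [lam]
    field_simp
    ring
  have : 0 ≤ 2 * v ^ 2 / (σ ^ 2 * r ^ 2 * (s + 1) ^ 2) * ((u - r) * (s * r - u)) :=
    mul_nonneg (by positivity) (mul_nonneg (by linarith) (by linarith))
  linarith

section CondExp

variable {Ω : Type*} {m m0 : MeasurableSpace Ω} {μ : Measure Ω} [IsFiniteMeasure μ]

theorem condExp_exp_sub_mul_le_one (hm : m ≤ m0) {X V : Ω → ℝ} {c : ℝ} (hc : 0 ≤ c)
    (hV : StronglyMeasurable[m] V) (hV0 : 0 ≤ V) (hX : Integrable (fun ω => exp (X ω)) μ)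
    (hmgf : μ[fun ω => exp (X ω)|m] ≤ᵐ[μ] fun ω => exp (c * V ω)) :
    μ[fun ω => exp (X ω - c * V ω)|m] ≤ᵐ[μ] 1 := by
  have hdamp : StronglyMeasurable[m] fun ω => exp (-(c * V ω)) :=
    continuous_exp.comp_stronglyMeasurable (hV.const_mul c).neg
  have hdamp_le : ∀ᵐ ω ∂μ, ‖exp (-(c * V ω))‖ ≤ 1 := ae_of_all _ fun ω => by
    rw [norm_of_nonneg (exp_nonneg _), exp_le_one_iff, neg_nonpos]
    exact mul_nonneg hc (hV0 ω)
  have hfactor : (fun ω => exp (X ω - c * V ω)) =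
      (fun ω => exp (-(c * V ω))) * fun ω => exp (X ω) := by
    ext ω; rw [Pi.mul_apply, ← exp_add]; ring_nf
  rw [hfactor]
  filter_upwards [condExp_stronglyMeasurable_mul_of_bound hm hdamp hX 1 hdamp_le, hmgf]
    with ω hpull hω
  rw [hpull, Pi.mul_apply, Pi.one_apply]
  calc exp (-(c * V ω)) * (μ[fun ω => exp (X ω)|m]) ω
      ≤ exp (-(c * V ω)) * exp (c * V ω) := mul_le_mul_of_nonneg_left hω (exp_nonneg _)
    _ = 1 := by rw [← exp_add, neg_add_cancel, exp_zero]

theorem lintegral_ofReal_mul_le_of_condExp_le_one_of_le (hm : m ≤ m0) {f g : Ω → ℝ} {C : ℝ}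
    (hf : StronglyMeasurable[m] f) (hf0 : 0 ≤ f) (hfC : ∀ ω, f ω ≤ C) (hg : Integrable g μ)
    (hg0 : 0 ≤ g) (hcond : μ[g|m] ≤ᵐ[μ] 1) :
    ∫⁻ ω, ENNReal.ofReal (f ω * g ω) ∂μ ≤ ∫⁻ ω, ENNReal.ofReal (f ω) ∂μ := by
  have hf_bound : ∀ᵐ ω ∂μ, ‖f ω‖ ≤ C := ae_of_all _ fun ω => by
    rw [norm_of_nonneg (hf0 ω)]; exact hfC ω
  have hf_int : Integrable f μ :=
    (integrable_const C).mono' (hf.mono hm).aestronglyMeasurable hf_bound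
  have hfg_int : Integrable (fun ω => f ω * g ω) μ :=
    hg.bdd_mul (hf.mono hm).aestronglyMeasurable hf_bound
  have hpull : μ[f * g|m] =ᵐ[μ] f * μ[g|m] :=
    condExp_stronglyMeasurable_mul_of_bound hm hf hg C hf_bound
  calc ∫⁻ ω, ENNReal.ofReal (f ω * g ω) ∂μ
      = ENNReal.ofReal (∫ ω, f ω * g ω ∂μ) :=
        (ofReal_integral_eq_lintegral_ofReal hfg_int
          (ae_of_all _ fun ω => mul_nonneg (hf0 ω) (hg0 ω))).symm
    _ = ENNReal.ofReal (∫ ω, f ω * (μ[g|m]) ω ∂μ) := by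
        rw [← integral_condExp hm]
        exact congrArg _ (integral_congr_ae hpull)
    _ ≤ ENNReal.ofReal (∫ ω, f ω ∂μ) := by
        refine ENNReal.ofReal_le_ofReal (integral_mono_ae ?_ hf_int ?_)
        · exact integrable_condExp.congr hpull
        · filter_upwards [hcond] with ω hω
          exact mul_le_of_le_one_right (hf0 ω) hω
    _ = ∫⁻ ω, ENNReal.ofReal (f ω) ∂μ :=
        ofReal_integral_eq_lintegral_ofReal hf_int (ae_of_all _ hf0)

theorem lintegral_ofReal_mul_le_of_condExp_le_one (hm : m ≤ m0) {f g : Ω → ℝ}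
    (hf : StronglyMeasurable[m] f) (hf0 : 0 ≤ f) (hg : Integrable g μ) (hg0 : 0 ≤ g)
    (hcond : μ[g|m] ≤ᵐ[μ] 1) :
    ∫⁻ ω, ENNReal.ofReal (f ω * g ω) ∂μ ≤ ∫⁻ ω, ENNReal.ofReal (f ω) ∂μ := by
  -- `f * g` need not be integrable: truncate `f` at `n`, then let `n → ∞` by monotone convergence
  have htrunc (n : ℕ) :
      ∫⁻ ω, ENNReal.ofReal (min (f ω) n * g ω) ∂μ ≤ ∫⁻ ω, ENNReal.ofReal (f ω) ∂μ :=
    (lintegral_ofReal_mul_le_of_condExp_le_one_of_le hm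
      (hf.measurable.min measurable_const).stronglyMeasurable
      (fun ω => le_min (hf0 ω) n.cast_nonneg) (fun ω => min_le_right _ _) hg hg0 hcond).trans
      (lintegral_mono fun ω => ENNReal.ofReal_le_ofReal (min_le_left _ _))
  have hsup : ∀ ω, ENNReal.ofReal (f ω * g ω) = ⨆ n : ℕ, ENNReal.ofReal (min (f ω) n * g ω) := by
    intro ω
    refine le_antisymm ?_ (iSup_le fun n => ?_)
    · refine le_iSup_of_le ⌈f ω⌉₊ ?_
      rw [min_eq_left (Nat.le_ceil _)]
    · exact ENNReal.ofReal_le_ofReal (mul_le_mul_of_nonneg_right (min_le_left _ _) (hg0 ω))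
  calc ∫⁻ ω, ENNReal.ofReal (f ω * g ω) ∂μ
      = ⨆ n : ℕ, ∫⁻ ω, ENNReal.ofReal (min (f ω) n * g ω) ∂μ := by
        simp_rw [hsup]
        refine lintegral_iSup' (fun n => ?_) (ae_of_all _ fun ω n k hnk => ?_)
        · exact ((((hf.mono hm).measurable.min measurable_const).aemeasurable).mul
            hg.aemeasurable).ennreal_ofReal
        · exact ENNReal.ofReal_le_ofReal (mul_le_mul_of_nonneg_right
            (min_le_min_left _ (Nat.cast_le.2 hnk)) (hg0 ω))
    _ ≤ ∫⁻ ω, ENNReal.ofReal (f ω) ∂μ := iSup_le htrunc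

end CondExp

theorem lintegral_exp_sum_sub_le_one {Ω : Type*} [m0 : MeasurableSpace Ω]
    (P : Measure Ω) [IsProbabilityMeasure P] (ℱ : Filtration ℕ m0) {σ lam : ℝ}
    {Y ε : ℕ → Ω → ℝ}
    (hY_adapted : ∀ t, 1 ≤ t → StronglyMeasurable[ℱ t] (Y t))
    (hε_pred : ∀ t, 1 ≤ t → StronglyMeasurable[ℱ (t - 1)] (ε t))
    (hε_nonneg : ∀ t, 1 ≤ t → 0 ≤ ε t)
    (hint : ∀ t, 1 ≤ t → Integrable (fun ω => exp (lam * Y t ω)) P)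
    (hmgf : ∀ t, 1 ≤ t → P[fun ω => exp (lam * Y t ω)|ℱ (t - 1)] ≤ᵐ[P]
      fun ω => exp (lam ^ 2 * σ ^ 2 * ε t ω / 2))
    (s : ℕ) :
    ∫⁻ ω, ENNReal.ofReal (exp (lam * ∑ τ ∈ Finset.Icc 1 s, Y τ ω
      - lam ^ 2 * σ ^ 2 / 2 * ∑ τ ∈ Finset.Icc 1 s, ε τ ω)) ∂P ≤ 1 := by
  induction s with
  | zero => simp
  | succ s ih =>
    have hs : 1 ≤ s + 1 := by omega
    set c := lam ^ 2 * σ ^ 2 / 2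
    set M : Ω → ℝ := fun ω =>
      exp (lam * ∑ τ ∈ Finset.Icc 1 s, Y τ ω - c * ∑ τ ∈ Finset.Icc 1 s, ε τ ω)
    set g : Ω → ℝ := fun ω => exp (lam * Y (s + 1) ω - c * ε (s + 1) ω)
    have hM : StronglyMeasurable[ℱ s] M := by
      refine continuous_exp.comp_stronglyMeasurable (.sub (.const_mul ?_ _) (.const_mul ?_ _))
      · refine Finset.stronglyMeasurable_fun_sum _ fun τ hτ => ?_
        exact (hY_adapted τ (Finset.mem_Icc.1 hτ).1).mono (ℱ.mono (Finset.mem_Icc.1 hτ).2)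
      · refine Finset.stronglyMeasurable_fun_sum _ fun τ hτ => ?_
        exact (hε_pred τ (Finset.mem_Icc.1 hτ).1).mono (ℱ.mono (by grind))
    have hε : StronglyMeasurable[ℱ s] (ε (s + 1)) := hε_pred (s + 1) hs
    have hg_int : Integrable g P := by
      refine (hint (s + 1) hs).mono' ?_ (ae_of_all _ fun ω => ?_)
      · exact (continuous_exp.comp_stronglyMeasurable
          ((((hY_adapted (s + 1) hs).mono (ℱ.le _)).const_mul lam).sub
            ((hε.mono (ℱ.le s)).const_mul c))).aestronglyMeasurable
      · rw [norm_of_nonneg (exp_nonneg _), exp_le_exp, sub_le_self_iff]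
        exact mul_nonneg (by positivity) (hε_nonneg (s + 1) hs ω)
    have hg_cond : P[g|ℱ s] ≤ᵐ[P] 1 := by
      refine condExp_exp_sub_mul_le_one (ℱ.le s) (by positivity) hε (hε_nonneg (s + 1) hs)
        (hint (s + 1) hs) ?_
      filter_upwards [hmgf (s + 1) hs] with ω hω
      simpa [c, mul_div_right_comm] using hω
    calc ∫⁻ ω, ENNReal.ofReal (exp (lam * ∑ τ ∈ Finset.Icc 1 (s + 1), Y τ ω
          - c * ∑ τ ∈ Finset.Icc 1 (s + 1), ε τ ω)) ∂P
        = ∫⁻ ω, ENNReal.ofReal (M ω * g ω) ∂P := by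
          refine lintegral_congr fun ω => ?_
          simp only [M, g, Finset.sum_Icc_succ_top hs, ← exp_add]
          ring_nf
      _ ≤ ∫⁻ ω, ENNReal.ofReal (M ω) ∂P :=
          lintegral_ofReal_mul_le_of_condExp_le_one (ℱ.le s) hM (fun ω => exp_nonneg _)
            hg_int (fun ω => exp_nonneg _) hg_cond
      _ ≤ 1 := ih

theorem measure_le_mul_of_forall_slice_le {Ω : Type*} [MeasurableSpace Ω] {μ : Measure Ω}
    {S : Set Ω} {V : Ω → ℝ} {ζ : ℝ} {K : ℕ} {b : ENNReal} (hK : 0 < K)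
    (hV : ∀ᵐ ω ∂μ, 1 ≤ V ω ∧ V ω ≤ ζ ^ K)
    (hslice : ∀ k, μ (S ∩ {ω | ζ ^ k ≤ V ω ∧ V ω ≤ ζ ^ (k + 1)}) ≤ b) :
    μ S ≤ K * b := by
  have hcover : S ≤ᵐ[μ] ⋃ k ∈ Finset.range K, S ∩ {ω | ζ ^ k ≤ V ω ∧ V ω ≤ ζ ^ (k + 1)} := by
    filter_upwards [hV] with ω ⟨h1, hK'⟩ hS
    obtain ⟨k, hk, hslice⟩ := exists_pow_le_and_le_pow_succ hK h1 hK'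
    exact Set.mem_biUnion (Finset.mem_range.2 hk) ⟨hS, hslice⟩
  calc μ S ≤ ∑ k ∈ Finset.range K, μ (S ∩ {ω | ζ ^ k ≤ V ω ∧ V ω ≤ ζ ^ (k + 1)}) :=
        (measure_mono_ae hcover).trans (measure_biUnion_finset_le _ _)
    _ ≤ ∑ k ∈ Finset.range K, b := Finset.sum_le_sum fun k _ => hslice k
    _ = K * b := by rw [Finset.sum_const, Finset.card_range, nsmul_eq_mul]

theorem measure_slice_le {Ω : Type*} [MeasurableSpace Ω] {P : Measure Ω} {X V : Ω → ℝ}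
    (hX : Measurable X) (hV : Measurable V) {σ θ a ζ : ℝ} (hσ : 0 < σ) (hθ : 0 < θ)
    (ha : 0 < a)
    (hsuper : ∀ lam : ℝ, 0 < lam →
      ∫⁻ ω, ENNReal.ofReal (exp (lam * X ω - lam ^ 2 * σ ^ 2 / 2 * V ω)) ∂P ≤ 1) :
    P ({ω | √(θ * V ω) ≤ X ω} ∩ {ω | a ≤ V ω ∧ V ω ≤ ζ * a}) ≤
      ENNReal.ofReal (exp (-(θ / (2 * σ ^ 2)) * (4 * √ζ / (√ζ + 1) ^ 2))) := by
  set s := √ζ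
  set r := √a
  set v := √θ
  set lam := 2 * v / (σ ^ 2 * r * (s + 1))
  set c := 2 * v ^ 2 * s / (σ ^ 2 * (s + 1) ^ 2)
  have hr : 0 < r := sqrt_pos.2 ha
  have hs : 0 ≤ s := sqrt_nonneg ζ
  have hc : c = θ / (2 * σ ^ 2) * (4 * s / (s + 1) ^ 2) := by
    simp only [c, v, sq_sqrt hθ.le]
    field_simp; ring
  have hslice : {ω | √(θ * V ω) ≤ X ω} ∩ {ω | a ≤ V ω ∧ V ω ≤ ζ * a} ⊆
      {ω | ENNReal.ofReal (exp c) ≤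
        ENNReal.ofReal (exp (lam * X ω - lam ^ 2 * σ ^ 2 / 2 * V ω))} := by
    rintro ω ⟨hXω, hlo, hhi⟩
    have hVω : V ω = √(V ω) ^ 2 := (sq_sqrt (ha.le.trans hlo)).symm
    have hlo' : r ≤ √(V ω) := sqrt_le_sqrt hlo
    have hhi' : √(V ω) ≤ s * r := (sqrt_le_sqrt hhi).trans_eq (sqrt_mul' ζ ha.le)
    have hXω' : v * √(V ω) ≤ X ω := by rwa [← sqrt_mul hθ.le]
    have hlam : 0 < lam := by positivity
    refine ENNReal.ofReal_le_ofReal (exp_le_exp.2 ?_)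
    have := chernoff_exponent_le (v := v) hσ hr hs hlo' hhi'
    rw [hVω]
    nlinarith [mul_le_mul_of_nonneg_left hXω' hlam.le]
  have hmeas : Measurable fun ω =>
      ENNReal.ofReal (exp (lam * X ω - lam ^ 2 * σ ^ 2 / 2 * V ω)) :=
    (measurable_exp.comp ((hX.const_mul lam).sub (hV.const_mul _))).ennreal_ofReal
  have hmarkov : ENNReal.ofReal (exp c) *
      P ({ω | √(θ * V ω) ≤ X ω} ∩ {ω | a ≤ V ω ∧ V ω ≤ ζ * a}) ≤ 1 :=
    (mul_le_mul_right (measure_mono hslice) _).trans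
      ((mul_meas_ge_le_lintegral₀ hmeas.aemeasurable _).trans (hsuper lam (by positivity)))
  rw [neg_mul, ← hc, exp_neg, ENNReal.ofReal_inv_of_pos (exp_pos c)]
  exact ENNReal.le_inv_iff_mul_le.2 (by rwa [mul_comm])

/-- One-sided form of the tail probability bound of Lemma 3. -/
theorem one_sided_tail_bound {Ω : Type*} [m0 : MeasurableSpace Ω]
    (P : Measure Ω) [IsProbabilityMeasure P] (ℱ : Filtration ℕ m0)
    (σ ξ ζ : ℝ) (hσ : 0 < σ) (hξ : 0 < ξ) (hζ : 1 < ζ) (d : ℕ)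
    (Y ε : ℕ → Ω → ℝ)
    (hY_adapted : ∀ t, 1 ≤ t → StronglyMeasurable[ℱ t] (Y t))
    (hε_pred : ∀ t, 1 ≤ t → StronglyMeasurable[ℱ (t - 1)] (ε t))
    (hε_nonneg : ∀ t, 1 ≤ t → ∀ ω, 0 ≤ ε t ω)
    (hint : ∀ lam : ℝ, 0 < lam → ∀ t, 1 ≤ t →
      Integrable (fun ω => Real.exp (lam * Y t ω)) P)
    (hmgf : ∀ lam : ℝ, 0 < lam → ∀ t, 1 ≤ t → ∀ᵐ ω ∂P,
      (P[fun ω => Real.exp (lam * Y t ω)|ℱ (t - 1)]) ω ≤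
        Real.exp (lam ^ 2 * σ ^ 2 * ε t ω / 2))
    (Z N : ℕ → Ω → ℝ)
    (hZ : ∀ t ω, Z t ω = ∑ τ ∈ Finset.Icc 1 t, Y τ ω)
    (hN : ∀ t ω, N t ω = ∑ τ ∈ Finset.Icc 1 t, ε τ ω)
    (t : ℕ) (ht : 2 ≤ t)
    (hNt : ∀ᵐ ω ∂P, 1 ≤ N t ω ∧ N t ω ≤ ((d : ℝ) + 1) * t) :
    P {ω | Z t ω ≥ Real.sqrt (2 * (ξ + 1) * σ ^ 2 * Real.log t * N t ω)} ≤
      ENNReal.ofReal ((⌈Real.log (((d : ℝ) + 1) * t) / Real.log ζ⌉₊ : ℝ) *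
        (t : ℝ) ^ (-(ξ + 1) * (1 - (ζ - 1) ^ 2 / 16))) := by
  have ht1 : (1 : ℝ) < t := by exact_mod_cast ht
  have hlogt : 0 < log t := log_pos ht1
  set θ := 2 * (ξ + 1) * σ ^ 2 * log t
  set K := ⌈logb ζ (((d : ℝ) + 1) * t)⌉₊
  have hK : 0 < K := Nat.ceil_pos.2 (logb_pos hζ (one_lt_mul_of_le_of_lt (by simp) ht1))
  have hZ_meas : Measurable (Z t) := by
    rw [funext (hZ t)]
    exact Finset.measurable_sum _ fun τ hτ =>
      ((hY_adapted τ (Finset.mem_Icc.1 hτ).1).mono (ℱ.le τ)).measurable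
  have hN_meas : Measurable (N t) := by
    rw [funext (hN t)]
    exact Finset.measurable_sum _ fun τ hτ =>
      ((hε_pred τ (Finset.mem_Icc.1 hτ).1).mono (ℱ.le (τ - 1))).measurable
  have hsuper (lam : ℝ) (hlam : 0 < lam) :
      ∫⁻ ω, ENNReal.ofReal (exp (lam * Z t ω - lam ^ 2 * σ ^ 2 / 2 * N t ω)) ∂P ≤ 1 := by
    simpa only [hZ, hN] using lintegral_exp_sum_sub_le_one P ℱ hY_adapted hε_pred hε_nonneg
      (hint lam hlam) (hmgf lam hlam) t
  have hθσ : θ / (2 * σ ^ 2) = (ξ + 1) * log t := by field_simp; ring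
  calc P {ω | √(θ * N t ω) ≤ Z t ω}
      ≤ K * ENNReal.ofReal (exp (-((ξ + 1) * log t) * (4 * √ζ / (√ζ + 1) ^ 2))) := by
        rw [← hθσ]
        refine measure_le_mul_of_forall_slice_le (V := N t) (ζ := ζ) hK ?_ fun k => ?_
        · filter_upwards [hNt] with ω ⟨h1, h2⟩
          exact ⟨h1, h2.trans (le_pow_ceil_logb hζ (by positivity))⟩
        · simpa only [pow_succ'] using measure_slice_le hZ_meas hN_meas hσ (by positivity)
            (pow_pos (by linarith) k) hsuper
    _ ≤ ENNReal.ofReal (K * (t : ℝ) ^ (-(ξ + 1) * (1 - (ζ - 1) ^ 2 / 16))) := by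
        rw [ENNReal.ofReal_mul K.cast_nonneg, ENNReal.ofReal_natCast]
        exact mul_le_mul_right (ENNReal.ofReal_le_ofReal
          (exp_neg_mul_log_le_rpow ht1.le (by linarith) hζ.le)) _
end

section
/- Let (Ω, F, P) be a probability space with a filtration (F_t)_{t∈ℕ} and let σ > 0, ξ > 0, ζ > 1, and let d ≥ 0 be an integer. Let (Y_t)_{t≥1} be a real-valued adapted process and (ε_t)_{t≥1} a nonnegative predictable process, and assume that for every λ ∈ ℝ and every t ≥ 1, exp(λ·Y_t) is integrable and E[exp(λ·Y_t) | F_{t−1}] ≤ exp(λ²σ²·ε_t/2) almost surely. Set Z_t = Σ_{τ=1}^{t} Y_τ and N_t = Σ_{τ=1}^{t} ε_τ, and fix an integer t ≥ 2 such that 1 ≤ N_t ≤ (d+1)·t almost surely. Then P(|Z_t| ≥ √(2(ξ+1)σ²·ln t · N_t)) ≤ 2·⌈ln((d+1)·t)/ln ζ⌉ · t^{−(ξ+1)(1−(ζ−1)²/16)}. -/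
/-!
For every `λ`, the process `exp (λ Z_s - λ² σ² N_s / 2)` is a nonnegative supermartingale: the
conditional sub-Gaussian bound on `Y_{s+1}` is exactly its one-step inequality. Hence its
expectation is at most `1`, and by Markov's inequality its exponent exceeds `b` with probability at
most `e^{-b}`. No single `λ` suits every value of the random normaliser `N_t`, so `[1, ζ^K]` is
peeled into the slabs `[ζ^k, ζ^(k+1)]`, `k < K`, and on each slab `λ` is tuned to the geometric
midpoint `ζ^(k+1/2)`; since `N_t` is within a factor `√ζ` of it, `√(N_t / ζ^(k+1/2))` is within
`(ζ - 1)/4` of `1`, which costs the factor `1 - (ζ - 1)²/16` in the exponent. A union bound over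
the slabs and over the two signs of `Z_t` concludes.
-/

open MeasureTheory
open scoped ENNReal

theorem lintegral_ofReal_mul_condExp_of_le {Ω : Type*} {m m0 : MeasurableSpace Ω}
    {P : Measure Ω} [IsFiniteMeasure P] (hm : m ≤ m0) {g f : Ω → ℝ} {C : ℝ}
    (hg : StronglyMeasurable[m] g) (hg0 : 0 ≤ g) (hgC : ∀ ω, g ω ≤ C) (hf : Integrable f P)
    (hf0 : 0 ≤ᵐ[P] f) :
    ∫⁻ ω, ENNReal.ofReal (g ω * f ω) ∂P = ∫⁻ ω, ENNReal.ofReal (g ω * P[f|m] ω) ∂P := by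
  have hg_bound : ∀ᵐ ω ∂P, ‖g ω‖ ≤ C := .of_forall fun ω => by
    rw [Real.norm_of_nonneg (hg0 ω)]; exact hgC ω
  have hg' : AEStronglyMeasurable g P := (hg.mono hm).aestronglyMeasurable
  calc ∫⁻ ω, ENNReal.ofReal (g ω * f ω) ∂P
      = ENNReal.ofReal (∫ ω, g ω * f ω ∂P) :=
        (ofReal_integral_eq_lintegral_ofReal (hf.bdd_mul hg' hg_bound)
          (hf0.mono fun ω hω => mul_nonneg (hg0 ω) hω)).symm
    _ = ENNReal.ofReal (∫ ω, g ω * P[f|m] ω ∂P) := by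
        rw [← integral_condExp hm]
        exact congrArg _ (integral_congr_ae
          (condExp_stronglyMeasurable_mul_of_bound hm hg hf C hg_bound))
    _ = ∫⁻ ω, ENNReal.ofReal (g ω * P[f|m] ω) ∂P :=
        ofReal_integral_eq_lintegral_ofReal (integrable_condExp.bdd_mul hg' hg_bound)
          ((condExp_nonneg hf0).mono fun ω hω => mul_nonneg (hg0 ω) hω)

theorem lintegral_ofReal_mul_le_of_condExp_le {Ω : Type*} {m m0 : MeasurableSpace Ω}
    {P : Measure Ω} [IsFiniteMeasure P] (hm : m ≤ m0) {g f h : Ω → ℝ}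
    (hg : StronglyMeasurable[m] g) (hg0 : 0 ≤ g) (hf : Integrable f P) (hf0 : 0 ≤ᵐ[P] f)
    (hfh : P[f|m] ≤ᵐ[P] h) :
    ∫⁻ ω, ENNReal.ofReal (g ω * f ω) ∂P ≤ ∫⁻ ω, ENNReal.ofReal (g ω * h ω) ∂P := by
  -- `g * f` need not be integrable, so truncate `g` and conclude by monotone convergence.
  have truncated (n : ℕ) :
      ∫⁻ ω, ENNReal.ofReal (min (g ω) n * f ω) ∂P ≤ ∫⁻ ω, ENNReal.ofReal (g ω * h ω) ∂P := by
    rw [lintegral_ofReal_mul_condExp_of_le hm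
      (hg.measurable.min (@measurable_const _ _ _ m _)).stronglyMeasurable
      (fun ω => le_min (hg0 ω) n.cast_nonneg) (fun ω => min_le_right _ _) hf hf0]
    refine lintegral_mono_ae ?_
    filter_upwards [hfh, condExp_nonneg (m := m) hf0] with ω hω hω0
    exact ENNReal.ofReal_le_ofReal (mul_le_mul (min_le_left _ _) hω hω0 (hg0 ω))
  have hsup : ∀ᵐ ω ∂P,
      ⨆ n : ℕ, ENNReal.ofReal (min (g ω) n * f ω) = ENNReal.ofReal (g ω * f ω) := by
    filter_upwards [hf0] with ω hω
    refine le_antisymm (iSup_le fun n => ?_) (le_iSup_of_le ⌈g ω⌉₊ ?_)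
    · exact ENNReal.ofReal_le_ofReal (mul_le_mul_of_nonneg_right (min_le_left _ _) hω)
    · rw [min_eq_left (Nat.le_ceil _)]
  have hmono : ∀ᵐ ω ∂P, Monotone fun n : ℕ => ENNReal.ofReal (min (g ω) n * f ω) := by
    filter_upwards [hf0] with ω hω
    exact fun n k hnk => ENNReal.ofReal_le_ofReal
      (mul_le_mul_of_nonneg_right (min_le_min_left _ (Nat.cast_le.mpr hnk)) hω)
  have hmeas (n : ℕ) : AEMeasurable (fun ω => ENNReal.ofReal (min (g ω) n * f ω)) P :=
    (((hg.mono hm).measurable.min measurable_const).aemeasurable.mul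
      hf.aemeasurable).ennreal_ofReal
  rw [← lintegral_congr_ae hsup, lintegral_iSup' hmeas hmono]
  exact iSup_le truncated

lemma exists_lt_pow_le_le_pow_succ {R : Type*} [Monoid R] [LinearOrder R] {ζ x : R} {K : ℕ}
    (hK : K ≠ 0) (hx : 1 ≤ x) (hxK : x ≤ ζ ^ K) : ∃ k < K, ζ ^ k ≤ x ∧ x ≤ ζ ^ (k + 1) := by
  classical
  have hK' : K - 1 + 1 = K := Nat.sub_add_cancel (Nat.one_le_iff_ne_zero.2 hK)
  have hex : ∃ k, x ≤ ζ ^ (k + 1) := ⟨K - 1, hK' ▸ hxK⟩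
  refine ⟨Nat.find hex, (Nat.find_le (hK' ▸ hxK)).trans_lt (by omega), ?_, Nat.find_spec hex⟩
  rcases h : Nat.find hex with _ | k
  · simpa using hx
  · exact (not_le.1 (Nat.find_min hex (h ▸ k.lt_succ_self))).le

lemma le_pow_ceil_logb_s7 {B ζ : ℝ} (hB : 0 < B) (hζ : 1 < ζ) : B ≤ ζ ^ ⌈Real.logb ζ B⌉₊ := by
  rw [← Real.rpow_natCast, ← Real.logb_le_iff_le_rpow hζ hB]
  exact Nat.le_ceil _

lemma abs_sub_one_le_of_pow_four_le {u ζ : ℝ} (hu : 0 < u) (h₁ : u ^ 4 ≤ ζ) (h₂ : ζ⁻¹ ≤ u ^ 4) :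
    |u - 1| ≤ (ζ - 1) / 4 := by
  obtain ⟨a, ha⟩ : ∃ a, a = 1 + (ζ - 1) / 4 := ⟨_, rfl⟩
  have hζ : 0 < ζ := (pow_pos hu 4).trans_le h₁
  have bernoulli : ζ ≤ a ^ 4 := by
    have := one_add_mul_le_pow (a := (ζ - 1) / 4) (by linarith) 4
    rw [ha]; push_cast at this; linarith
  have hua : u ≤ a := le_of_pow_le_pow_left₀ four_ne_zero (by linarith) (h₁.trans bernoulli)
  have hua' : u⁻¹ ≤ a := le_of_pow_le_pow_left₀ four_ne_zero (by linarith)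
    (by rw [inv_pow]; exact ((inv_le_comm₀ hζ (pow_pos hu 4)).1 h₂).trans bernoulli)
  rw [inv_le_iff_one_le_mul₀ hu] at hua'
  rw [abs_le]
  constructor <;> nlinarith [sq_nonneg (a - u)]

lemma chernoff_exponent_ge {σ a q N S : ℝ} (hσ : 0 < σ) (ha : 0 ≤ a) (hq : 0 < q) (hN : 0 ≤ N)
    (hS : Real.sqrt (2 * a * σ ^ 2 * N) ≤ S) :
    a * (1 - (Real.sqrt (N / q) - 1) ^ 2) ≤
      Real.sqrt (2 * a / q) / σ * S - (Real.sqrt (2 * a / q) / σ) ^ 2 * σ ^ 2 / 2 * N := by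
  have linear : Real.sqrt (2 * a / q) / σ * Real.sqrt (2 * a * σ ^ 2 * N) =
      2 * a * Real.sqrt (N / q) := by
    rw [div_mul_eq_mul_div, ← Real.sqrt_mul (by positivity),
      show 2 * a / q * (2 * a * σ ^ 2 * N) = (2 * a * σ) ^ 2 * (N / q) by field_simp,
      Real.sqrt_mul (by positivity), Real.sqrt_sq (by positivity)]
    field_simp
  have quadratic : (Real.sqrt (2 * a / q) / σ) ^ 2 * σ ^ 2 / 2 * N = a * Real.sqrt (N / q) ^ 2 := by
    rw [div_pow, Real.sq_sqrt (by positivity), Real.sq_sqrt (by positivity)]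
    field_simp
  have hlam : 0 ≤ Real.sqrt (2 * a / q) / σ := by positivity
  nlinarith [mul_le_mul_of_nonneg_left hS hlam]

lemma exists_chernoff_param_on_slab {σ a ζ : ℝ} (hσ : 0 < σ) (ha : 0 ≤ a) (hζ : 1 < ζ) (k : ℕ) :
    ∃ lam : ℝ, ∀ S N : ℝ, ζ ^ k ≤ N → N ≤ ζ ^ (k + 1) → Real.sqrt (2 * a * σ ^ 2 * N) ≤ S →
      a * (1 - (ζ - 1) ^ 2 / 16) ≤ lam * S - lam ^ 2 * σ ^ 2 / 2 * N := by
  have hζ0 : 0 < ζ := one_pos.trans hζ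
  set q := ζ ^ k * Real.sqrt ζ
  have hq : 0 < q := by positivity
  have hq2 : q ^ 2 = ζ ^ k * ζ ^ k * ζ := by
    rw [mul_pow, Real.sq_sqrt hζ0.le]; ring
  refine ⟨Real.sqrt (2 * a / q) / σ, fun S N hkN hNk hS => ?_⟩
  have hN : 0 < N := (pow_pos hζ0 k).trans_le hkN
  have hu4 : Real.sqrt (N / q) ^ 4 = N ^ 2 / q ^ 2 := by
    rw [show 4 = 2 * 2 from rfl, pow_mul, Real.sq_sqrt (by positivity), div_pow]
  have hupper : Real.sqrt (N / q) ^ 4 ≤ ζ := by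
    rw [hu4, div_le_iff₀ (by positivity), hq2]
    nlinarith [pow_succ ζ k]
  have hlower : ζ⁻¹ ≤ Real.sqrt (N / q) ^ 4 := by
    rw [hu4, le_div_iff₀ (by positivity), hq2, mul_comm, mul_inv_cancel_right₀ hζ0.ne', ← sq]
    exact pow_le_pow_left₀ (by positivity) hkN 2
  have hdev := abs_sub_one_le_of_pow_four_le (Real.sqrt_pos.2 (div_pos hN hq)) hupper hlower
  have hdev2 : (Real.sqrt (N / q) - 1) ^ 2 ≤ (ζ - 1) ^ 2 / 16 := by
    rw [← sq_abs]; nlinarith [abs_nonneg (Real.sqrt (N / q) - 1)]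
  calc a * (1 - (ζ - 1) ^ 2 / 16) ≤ a * (1 - (Real.sqrt (N / q) - 1) ^ 2) := by gcongr
    _ ≤ _ := chernoff_exponent_ge hσ ha hq hN.le hS

structure CondSubgaussianIncrements {Ω : Type*} [m0 : MeasurableSpace Ω] (P : Measure Ω)
    (ℱ : Filtration ℕ m0) (σ : ℝ) (Y ε : ℕ → Ω → ℝ) : Prop where
  adapted : ∀ t, 1 ≤ t → StronglyMeasurable[ℱ t] (Y t)
  predictable : ∀ t, 1 ≤ t → StronglyMeasurable[ℱ (t - 1)] (ε t)
  integrable_exp : ∀ lam : ℝ, ∀ t, 1 ≤ t → Integrable (fun ω => Real.exp (lam * Y t ω)) P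
  condExp_exp_le : ∀ lam : ℝ, ∀ t, 1 ≤ t → ∀ᵐ ω ∂P,
    P[fun ω => Real.exp (lam * Y t ω)|ℱ (t - 1)] ω ≤ Real.exp (lam ^ 2 * σ ^ 2 * ε t ω / 2)

def partialSum {Ω : Type*} (X : ℕ → Ω → ℝ) (s : ℕ) (ω : Ω) : ℝ :=
  ∑ τ ∈ Finset.Icc 1 s, X τ ω

lemma partialSum_zero {Ω : Type*} (X : ℕ → Ω → ℝ) : partialSum X 0 = 0 := by
  ext ω; simp [partialSum]

lemma partialSum_succ {Ω : Type*} (X : ℕ → Ω → ℝ) (s : ℕ) (ω : Ω) :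
    partialSum X (s + 1) ω = partialSum X s ω + X (s + 1) ω :=
  Finset.sum_Icc_succ_top (Nat.le_add_left 1 s) _

lemma partialSum_neg {Ω : Type*} (X : ℕ → Ω → ℝ) (s : ℕ) (ω : Ω) :
    partialSum (-X) s ω = -partialSum X s ω :=
  Finset.sum_neg_distrib _

lemma stronglyMeasurable_partialSum {Ω : Type*} {m : MeasurableSpace Ω} {X : ℕ → Ω → ℝ} {s : ℕ}
    (hX : ∀ τ, 1 ≤ τ → τ ≤ s → StronglyMeasurable[m] (X τ)) :
    StronglyMeasurable[m] (partialSum X s) := by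
  have : partialSum X s = ∑ τ ∈ Finset.Icc 1 s, X τ := by ext ω; simp [partialSum]
  rw [this]
  exact Finset.stronglyMeasurable_sum _ fun τ hτ =>
    hX τ (Finset.mem_Icc.1 hτ).1 (Finset.mem_Icc.1 hτ).2

noncomputable def expSupermartingale {Ω : Type*} (σ lam : ℝ) (Y ε : ℕ → Ω → ℝ) (s : ℕ) (ω : Ω) :
    ℝ :=
  Real.exp (lam * partialSum Y s ω - lam ^ 2 * σ ^ 2 / 2 * partialSum ε s ω)

lemma expSupermartingale_succ {Ω : Type*} (σ lam : ℝ) (Y ε : ℕ → Ω → ℝ) (s : ℕ) (ω : Ω) :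
    expSupermartingale σ lam Y ε (s + 1) ω =
      expSupermartingale σ lam Y ε s ω * Real.exp (-(lam ^ 2 * σ ^ 2 * ε (s + 1) ω / 2)) *
        Real.exp (lam * Y (s + 1) ω) := by
  simp only [expSupermartingale, partialSum_succ, ← Real.exp_add]
  ring_nf

namespace CondSubgaussianIncrements

variable {Ω : Type*} [m0 : MeasurableSpace Ω] {P : Measure Ω} {ℱ : Filtration ℕ m0} {σ : ℝ}
  {Y ε : ℕ → Ω → ℝ}

lemma neg (h : CondSubgaussianIncrements P ℱ σ Y ε) : CondSubgaussianIncrements P ℱ σ (-Y) ε where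
  adapted t ht := (h.adapted t ht).neg
  predictable := h.predictable
  integrable_exp lam t ht := by simpa using h.integrable_exp (-lam) t ht
  condExp_exp_le lam t ht := by simpa using h.condExp_exp_le (-lam) t ht

lemma stronglyMeasurable_expSupermartingale (h : CondSubgaussianIncrements P ℱ σ Y ε)
    (lam : ℝ) (s : ℕ) : StronglyMeasurable[ℱ s] (expSupermartingale σ lam Y ε s) := by
  have hY := stronglyMeasurable_partialSum (m := ℱ s) (X := Y) (s := s) fun τ hτ hτs =>
    (h.adapted τ hτ).mono (ℱ.mono hτs)
  have hε := stronglyMeasurable_partialSum (m := ℱ s) (X := ε) (s := s) fun τ hτ hτs =>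
    (h.predictable τ hτ).mono (ℱ.mono (by omega))
  exact Real.continuous_exp.comp_stronglyMeasurable
    ((hY.const_mul lam).sub (hε.const_mul _))

variable [IsProbabilityMeasure P]

lemma lintegral_expSupermartingale_le_one (h : CondSubgaussianIncrements P ℱ σ Y ε)
    (lam : ℝ) (s : ℕ) : ∫⁻ ω, ENNReal.ofReal (expSupermartingale σ lam Y ε s ω) ∂P ≤ 1 := by
  induction s with
  | zero => simp [expSupermartingale, partialSum_zero]
  | succ s ih =>
    set b : Ω → ℝ := fun ω => lam ^ 2 * σ ^ 2 * ε (s + 1) ω / 2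
    have hg : StronglyMeasurable[ℱ s]
        fun ω => expSupermartingale σ lam Y ε s ω * Real.exp (-b ω) := by
      have hε : StronglyMeasurable[ℱ s] (ε (s + 1)) := by
        simpa using h.predictable (s + 1) (by omega)
      have hb : Measurable[ℱ s] b := (hε.measurable.const_mul _).div_const _
      exact (h.stronglyMeasurable_expSupermartingale lam s).mul hb.neg.exp.stronglyMeasurable
    have hcond : P[fun ω => Real.exp (lam * Y (s + 1) ω)|ℱ s] ≤ᵐ[P] fun ω => Real.exp (b ω) := by
      simpa [b, Filter.EventuallyLE] using h.condExp_exp_le lam (s + 1) (by omega)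
    calc ∫⁻ ω, ENNReal.ofReal (expSupermartingale σ lam Y ε (s + 1) ω) ∂P
        = ∫⁻ ω, ENNReal.ofReal (expSupermartingale σ lam Y ε s ω * Real.exp (-b ω) *
            Real.exp (lam * Y (s + 1) ω)) ∂P := by simp only [expSupermartingale_succ, b]
      _ ≤ ∫⁻ ω, ENNReal.ofReal (expSupermartingale σ lam Y ε s ω * Real.exp (-b ω) *
            Real.exp (b ω)) ∂P :=
          lintegral_ofReal_mul_le_of_condExp_le (ℱ.le s) hg
            (fun ω => mul_nonneg (Real.exp_pos _).le (Real.exp_pos _).le)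
            (h.integrable_exp lam (s + 1) (by omega)) (.of_forall fun ω => (Real.exp_pos _).le)
            hcond
      _ = ∫⁻ ω, ENNReal.ofReal (expSupermartingale σ lam Y ε s ω) ∂P := by
          simp_rw [mul_assoc, ← Real.exp_add, neg_add_cancel, Real.exp_zero, mul_one]
      _ ≤ 1 := ih

lemma measure_le_exp_neg_of_le (h : CondSubgaussianIncrements P ℱ σ Y ε) {lam b : ℝ} {t : ℕ}
    {A : Set Ω}
    (hA : ∀ ω ∈ A, b ≤ lam * partialSum Y t ω - lam ^ 2 * σ ^ 2 / 2 * partialSum ε t ω) :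
    P A ≤ ENNReal.ofReal (Real.exp (-b)) := by
  set M := fun ω => ENNReal.ofReal (expSupermartingale σ lam Y ε t ω)
  have hM : AEMeasurable M P :=
    ((h.stronglyMeasurable_expSupermartingale lam t).mono (ℱ.le t)).measurable.ennreal_ofReal
      |>.aemeasurable
  have hAM : A ⊆ {ω | ENNReal.ofReal (Real.exp b) ≤ M ω} := fun ω hω =>
    ENNReal.ofReal_le_ofReal (Real.exp_le_exp.2 (hA ω hω))
  have markov : ENNReal.ofReal (Real.exp b) * P A ≤ 1 :=
    calc ENNReal.ofReal (Real.exp b) * P A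
        ≤ ENNReal.ofReal (Real.exp b) * P {ω | ENNReal.ofReal (Real.exp b) ≤ M ω} := by
          gcongr
      _ ≤ ∫⁻ ω, M ω ∂P := mul_meas_ge_le_lintegral₀ hM _
      _ ≤ 1 := h.lintegral_expSupermartingale_le_one lam t
  rw [Real.exp_neg, ENNReal.ofReal_inv_of_pos (Real.exp_pos b)]
  exact ENNReal.le_inv_iff_mul_le.2 (by rwa [mul_comm])

theorem measure_sqrt_le_partialSum_le (h : CondSubgaussianIncrements P ℱ σ Y ε) {a ζ : ℝ}
    (hσ : 0 < σ) (ha : 0 ≤ a) (hζ : 1 < ζ) {K : ℕ} (hK : K ≠ 0) {t : ℕ}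
    (hN : ∀ᵐ ω ∂P, 1 ≤ partialSum ε t ω ∧ partialSum ε t ω ≤ ζ ^ K) :
    P {ω | Real.sqrt (2 * a * σ ^ 2 * partialSum ε t ω) ≤ partialSum Y t ω} ≤
      ENNReal.ofReal (K * Real.exp (-(a * (1 - (ζ - 1) ^ 2 / 16)))) := by
  choose lam hlam using exists_chernoff_param_on_slab hσ ha hζ
  set slab : ℕ → Set Ω := fun k => {ω | Real.sqrt (2 * a * σ ^ 2 * partialSum ε t ω) ≤
    partialSum Y t ω ∧ ζ ^ k ≤ partialSum ε t ω ∧ partialSum ε t ω ≤ ζ ^ (k + 1)}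
  have hcover : {ω | Real.sqrt (2 * a * σ ^ 2 * partialSum ε t ω) ≤ partialSum Y t ω} ≤ᵐ[P]
      (⋃ k ∈ Finset.range K, slab k : Set Ω) := by
    filter_upwards [hN] with ω ⟨hlo, hhi⟩ hω
    obtain ⟨k, hkK, hk⟩ := exists_lt_pow_le_le_pow_succ hK hlo hhi
    exact Set.mem_biUnion (Finset.mem_range.2 hkK) ⟨hω, hk⟩
  calc P {ω | Real.sqrt (2 * a * σ ^ 2 * partialSum ε t ω) ≤ partialSum Y t ω}
      ≤ ∑ k ∈ Finset.range K, P (slab k) :=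
        (measure_mono_ae hcover).trans (measure_biUnion_finset_le _ _)
    _ ≤ ∑ _k ∈ Finset.range K, ENNReal.ofReal (Real.exp (-(a * (1 - (ζ - 1) ^ 2 / 16)))) :=
        Finset.sum_le_sum fun k _ =>
          h.measure_le_exp_neg_of_le fun ω ⟨hω, hkN, hNk⟩ => hlam k _ _ hkN hNk hω
    _ = ENNReal.ofReal (K * Real.exp (-(a * (1 - (ζ - 1) ^ 2 / 16)))) := by
        rw [Finset.sum_const, Finset.card_range, nsmul_eq_mul, ENNReal.ofReal_mul (by positivity),
          ENNReal.ofReal_natCast]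

end CondSubgaussianIncrements

theorem two_sided_tail_bound_general {Ω : Type*} [m0 : MeasurableSpace Ω]
    (P : Measure Ω) [IsProbabilityMeasure P] (ℱ : Filtration ℕ m0)
    (σ ξ ζ : ℝ) (hσ : 0 < σ) (hξ : 0 < ξ) (hζ : 1 < ζ) (d : ℕ)
    (Y ε : ℕ → Ω → ℝ)
    (hY_adapted : ∀ t, 1 ≤ t → StronglyMeasurable[ℱ t] (Y t))
    (hε_pred : ∀ t, 1 ≤ t → StronglyMeasurable[ℱ (t - 1)] (ε t))
    (hint : ∀ lam : ℝ, ∀ t, 1 ≤ t →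
      Integrable (fun ω => Real.exp (lam * Y t ω)) P)
    (hmgf : ∀ lam : ℝ, ∀ t, 1 ≤ t → ∀ᵐ ω ∂P,
      (P[fun ω => Real.exp (lam * Y t ω)|ℱ (t - 1)]) ω ≤
        Real.exp (lam ^ 2 * σ ^ 2 * ε t ω / 2))
    (Z N : ℕ → Ω → ℝ)
    (hZ : ∀ t ω, Z t ω = ∑ τ ∈ Finset.Icc 1 t, Y τ ω)
    (hN : ∀ t ω, N t ω = ∑ τ ∈ Finset.Icc 1 t, ε τ ω)
    (t : ℕ) (ht : 2 ≤ t)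
    (hNt : ∀ᵐ ω ∂P, 1 ≤ N t ω ∧ N t ω ≤ ((d : ℝ) + 1) * t) :
    P {ω | |Z t ω| ≥ Real.sqrt (2 * (ξ + 1) * σ ^ 2 * Real.log t * N t ω)} ≤
      ENNReal.ofReal (2 * (⌈Real.log (((d : ℝ) + 1) * t) / Real.log ζ⌉₊ : ℝ) *
        (t : ℝ) ^ (-(ξ + 1) * (1 - (ζ - 1) ^ 2 / 16))) := by
  have ht1 : (1 : ℝ) < t := by exact_mod_cast ht
  have hB : 1 < ((d : ℝ) + 1) * t := by nlinarith [(d.cast_nonneg : (0 : ℝ) ≤ d)]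
  set K := ⌈Real.log (((d : ℝ) + 1) * t) / Real.log ζ⌉₊
  have hK : K ≠ 0 := (Nat.ceil_pos.2 (div_pos (Real.log_pos hB) (Real.log_pos hζ))).ne'
  have hNK : ∀ᵐ ω ∂P, 1 ≤ partialSum ε t ω ∧ partialSum ε t ω ≤ ζ ^ K := by
    filter_upwards [hNt] with ω hω
    rw [hN] at hω
    exact ⟨hω.1, hω.2.trans (le_pow_ceil_logb_s7 (by positivity) hζ)⟩
  have h : CondSubgaussianIncrements P ℱ σ Y ε := ⟨hY_adapted, hε_pred, hint, hmgf⟩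
  have ha : 0 ≤ (ξ + 1) * Real.log t := by have := Real.log_pos ht1; positivity
  have hsplit : {ω | |Z t ω| ≥ Real.sqrt (2 * (ξ + 1) * σ ^ 2 * Real.log t * N t ω)} ⊆
      {ω | Real.sqrt (2 * ((ξ + 1) * Real.log t) * σ ^ 2 * partialSum ε t ω) ≤ partialSum Y t ω} ∪
        {ω | Real.sqrt (2 * ((ξ + 1) * Real.log t) * σ ^ 2 * partialSum ε t ω) ≤
          partialSum (-Y) t ω} := by
    intro ω hω
    have hthr : 2 * ((ξ + 1) * Real.log t) * σ ^ 2 * partialSum ε t ω =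
        2 * (ξ + 1) * σ ^ 2 * Real.log t * N t ω := by rw [hN, partialSum]; ring
    rw [Set.mem_ofPred_eq, hZ] at hω
    rw [Set.mem_union, Set.mem_ofPred_eq, Set.mem_ofPred_eq, partialSum_neg, hthr]
    exact le_abs.1 hω
  calc _ ≤ _ := measure_mono hsplit
    _ ≤ _ := measure_union_le _ _
    _ ≤ _ := add_le_add (h.measure_sqrt_le_partialSum_le hσ ha hζ hK hNK)
          (h.neg.measure_sqrt_le_partialSum_le hσ ha hζ hK hNK)
    _ = _ := by
        rw [← ENNReal.ofReal_add (by positivity) (by positivity),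
          Real.rpow_def_of_pos (by positivity)]
        ring_nf

/-- Two-sided form of the tail probability bound of Lemma 3. -/
theorem two_sided_tail_bound {Ω : Type*} [m0 : MeasurableSpace Ω]
    (P : Measure Ω) [IsProbabilityMeasure P] (ℱ : Filtration ℕ m0)
    (σ ξ ζ : ℝ) (hσ : 0 < σ) (hξ : 0 < ξ) (hζ : 1 < ζ) (d : ℕ)
    (Y ε : ℕ → Ω → ℝ)
    (hY_adapted : ∀ t, 1 ≤ t → StronglyMeasurable[ℱ t] (Y t))
    (hε_pred : ∀ t, 1 ≤ t → StronglyMeasurable[ℱ (t - 1)] (ε t))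
    (hε_nonneg : ∀ t, 1 ≤ t → ∀ ω, 0 ≤ ε t ω)
    (hint : ∀ lam : ℝ, ∀ t, 1 ≤ t →
      Integrable (fun ω => Real.exp (lam * Y t ω)) P)
    (hmgf : ∀ lam : ℝ, ∀ t, 1 ≤ t → ∀ᵐ ω ∂P,
      (P[fun ω => Real.exp (lam * Y t ω)|ℱ (t - 1)]) ω ≤
        Real.exp (lam ^ 2 * σ ^ 2 * ε t ω / 2))
    (Z N : ℕ → Ω → ℝ)
    (hZ : ∀ t ω, Z t ω = ∑ τ ∈ Finset.Icc 1 t, Y τ ω)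
    (hN : ∀ t ω, N t ω = ∑ τ ∈ Finset.Icc 1 t, ε τ ω)
    (t : ℕ) (ht : 2 ≤ t)
    (hNt : ∀ᵐ ω ∂P, 1 ≤ N t ω ∧ N t ω ≤ ((d : ℝ) + 1) * t) :
    P {ω | |Z t ω| ≥ Real.sqrt (2 * (ξ + 1) * σ ^ 2 * Real.log t * N t ω)} ≤
      ENNReal.ofReal (2 * (⌈Real.log (((d : ℝ) + 1) * t) / Real.log ζ⌉₊ : ℝ) *
        (t : ℝ) ^ (-(ξ + 1) * (1 - (ζ - 1) ^ 2 / 16))) :=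
  two_sided_tail_bound_general (m0 := m0) P ℱ σ ξ ζ hσ hξ hζ d Y ε hY_adapted hε_pred hint hmgf Z N
    hZ hN t ht hNt
end

section
/- For every real number ξ ≥ 1.1, every integer d ≥ 0, and every integer T ≥ 1, one has Σ_{t=1}^{T−1} (1/ln 1.3) · ln((d+1)·t) / t^{(ξ+1)(1−(1.3−1)²/16)} ≤ 12·ln(3(d+1)) + 3·(ln(d+1) + 1). -/
/-!
Since `ξ ≥ 1.1`, the exponent is at least `2`, so the `t`-th summand is at most
`(log (d + 1) + log t) / (t ^ 2 · log 1.3)`. The first part sums to at most `2 log (d + 1)`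
(as `∑ 1 / t ^ 2 ≤ 2`), and `log t ≤ 2 (√t - 1)` turns the second into a telescoping
sum against `2 / √t`, bounded by `4`. With `1 / log 1.3 ≤ 4` and `log 3 ≥ 13 / 12`
the total `8 log (d + 1) + 16` fits under the stated constant.
-/

open Finset Real

lemma le_log_of_exp_one_pow_le {x : ℝ} {m n : ℕ} (hn : 0 < n)
    (h : exp 1 ^ m ≤ x ^ n) : (m / n : ℝ) ≤ log x := by
  have hlog := log_le_log (by positivity) h
  rw [log_pow, log_pow, log_exp, mul_one] at hlog
  rw [div_le_iff₀ (by positivity)]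
  linarith

lemma quarter_le_log_one_point_three : (1 / 4 : ℝ) ≤ log 1.3 := by
  have h : exp 1 ^ 1 ≤ (1.3 : ℝ) ^ 4 := by
    have := exp_one_lt_d9
    norm_num at this ⊢
    linarith
  exact_mod_cast le_log_of_exp_one_pow_le (by norm_num) h

lemma thirteen_twelfths_le_log_three : (13 / 12 : ℝ) ≤ log 3 := by
  have h : exp 1 ^ 13 ≤ (3 : ℝ) ^ 12 :=
    (pow_le_pow_left₀ (exp_pos 1).le exp_one_lt_d9.le 13).trans (by norm_num)
  exact_mod_cast le_log_of_exp_one_pow_le (by norm_num) h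

lemma log_le_two_mul_sqrt_sub_one {x : ℝ} (hx : 0 < x) : log x ≤ 2 * (√x - 1) := by
  have := log_le_sub_one_of_pos (sqrt_pos.mpr hx)
  rw [log_sqrt hx.le] at this
  linarith

lemma sum_Icc_le_of_le_sub {f g : ℕ → ℝ} (hfg : ∀ n, 1 ≤ n → f (n + 1) ≤ g n - g (n + 1))
    {N : ℕ} (hN : 1 ≤ N) : ∑ t ∈ Icc 1 N, f t ≤ f 1 + g 1 - g N := by
  induction N, hN using Nat.le_induction with
  | base => simp
  | succ n hn ih =>
    rw [sum_Icc_succ_top (by omega)]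
    linarith [hfg n hn]

lemma sum_Icc_inv_sq_le_two (N : ℕ) : ∑ t ∈ Icc 1 N, ((t : ℝ) ^ 2)⁻¹ ≤ 2 := by
  have hIcc : Icc 1 N = Ioo 0 (N + 1) := by ext; simp; omega
  simpa [hIcc] using sum_Ioo_inv_sq_le (α := ℝ) 0 (N + 1)

lemma sqrt_succ_sub_one_div_sq_le {x : ℝ} (hx : 1 ≤ x) :
    (√(x + 1) - 1) / (x + 1) ^ 2 ≤ 2 / √x - 2 / √(x + 1) := by
  set a := √x
  set b := √(x + 1)
  have ha2 : a ^ 2 = x := sq_sqrt (by linarith)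
  have hb2 : b ^ 2 = x + 1 := sq_sqrt (by linarith)
  have ha : 1 ≤ a := one_le_sqrt.mpr hx
  have hab : a ≤ b := sqrt_le_sqrt (by linarith)
  rw [← hb2, div_sub_div _ _ (by positivity) (by positivity),
    div_le_div_iff₀ (by positivity) (by positivity)]
  -- `b - a = 1 / (a + b) ≥ 1 / (2 b)`
  have hgap : 1 ≤ 2 * b * (b - a) := by nlinarith
  nlinarith [mul_le_mul_of_nonneg_left hgap (by positivity : (0 : ℝ) ≤ b ^ 2)]

lemma sum_Icc_sqrt_sub_one_div_sq_le_two (N : ℕ) :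
    ∑ t ∈ Icc 1 N, (√t - 1) / (t : ℝ) ^ 2 ≤ 2 := by
  rcases Nat.eq_zero_or_pos N with rfl | hN
  · simp
  have htelescope := sum_Icc_le_of_le_sub (f := fun t : ℕ => (√(t : ℝ) - 1) / (t : ℝ) ^ 2)
    (g := fun t : ℕ => 2 / √(t : ℝ)) (fun n hn => by
      push_cast
      exact sqrt_succ_sub_one_div_sq_le (by exact_mod_cast hn)) hN
  have : 0 ≤ 2 / √(N : ℝ) := by positivity
  simp only [Nat.cast_one, sqrt_one, sub_self, zero_div, div_one, zero_add] at htelescope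
  linarith

lemma log_mul_div_rpow_le {c x p : ℝ} (hc : 1 ≤ c) (hx : 1 ≤ x) (hp : 2 ≤ p) :
    log (c * x) / x ^ p ≤ log c * (x ^ 2)⁻¹ + 2 * ((√x - 1) / x ^ 2) := by
  have hx2p : x ^ 2 ≤ x ^ p := by
    rw [← rpow_natCast]
    exact rpow_le_rpow_of_exponent_le hx (by norm_num [hp])
  calc log (c * x) / x ^ p ≤ log (c * x) / x ^ 2 :=
        div_le_div_of_nonneg_left (log_nonneg (by nlinarith)) (by positivity) hx2p
    _ = (log c + log x) / x ^ 2 := by rw [log_mul (by positivity) (by positivity)]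
    _ ≤ (log c + 2 * (√x - 1)) / x ^ 2 := by
        gcongr
        exact log_le_two_mul_sqrt_sub_one (by positivity)
    _ = log c * (x ^ 2)⁻¹ + 2 * ((√x - 1) / x ^ 2) := by ring

lemma sum_Icc_log_mul_div_rpow_le {c p : ℝ} (hc : 1 ≤ c) (hp : 2 ≤ p) (N : ℕ) :
    ∑ t ∈ Icc 1 N, log (c * t) / (t : ℝ) ^ p ≤ 2 * log c + 4 := by
  calc ∑ t ∈ Icc 1 N, log (c * t) / (t : ℝ) ^ p
      ≤ ∑ t ∈ Icc 1 N, (log c * ((t : ℝ) ^ 2)⁻¹ + 2 * ((√t - 1) / (t : ℝ) ^ 2)) :=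
        sum_le_sum fun t ht =>
          log_mul_div_rpow_le hc (by exact_mod_cast (mem_Icc.mp ht).1) hp
    _ = log c * ∑ t ∈ Icc 1 N, ((t : ℝ) ^ 2)⁻¹
          + 2 * ∑ t ∈ Icc 1 N, (√t - 1) / (t : ℝ) ^ 2 := by
        rw [sum_add_distrib, mul_sum, mul_sum]
    _ ≤ log c * 2 + 2 * 2 := by
        gcongr
        · exact log_nonneg hc
        · exact sum_Icc_inv_sq_le_two N
        · exact sum_Icc_sqrt_sub_one_div_sq_le_two N
    _ = 2 * log c + 4 := by ring

theorem tail_sum_bound_general (ξ : ℝ) (hξ : 1.1 ≤ ξ) (d : ℕ) (T : ℕ) :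
    ∑ t ∈ Finset.Icc 1 (T - 1),
        (1 / Real.log 1.3) *
          (Real.log (((d : ℝ) + 1) * t) /
            (t : ℝ) ^ ((ξ + 1) * (1 - (1.3 - 1) ^ 2 / 16))) ≤
      12 * Real.log (3 * ((d : ℝ) + 1)) + 3 * (Real.log ((d : ℝ) + 1) + 1) := by
  have hd : (1 : ℝ) ≤ d + 1 := by linarith [d.cast_nonneg (α := ℝ)]
  have hA := log_nonneg hd
  have hexp : (2 : ℝ) ≤ (ξ + 1) * (1 - (1.3 - 1) ^ 2 / 16) := by nlinarith
  have hsum := sum_Icc_log_mul_div_rpow_le hd hexp (T - 1)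
  have hlog13 : 0 < log 1.3 := by linarith [quarter_le_log_one_point_three]
  have hfactor : 1 / log 1.3 ≤ 4 := by
    rw [div_le_iff₀ hlog13]
    linarith [quarter_le_log_one_point_three]
  rw [← mul_sum, log_mul (by norm_num) (by positivity)]
  calc (1 / log 1.3) * ∑ t ∈ Icc 1 (T - 1),
        log ((d + 1) * t) / (t : ℝ) ^ ((ξ + 1) * (1 - (1.3 - 1) ^ 2 / 16))
      ≤ 4 * (2 * log (d + 1) + 4) :=
        (mul_le_mul_of_nonneg_left hsum (by positivity)).trans
          (mul_le_mul_of_nonneg_right hfactor (by linarith))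
    _ ≤ _ := by linarith [thirteen_twelfths_le_log_three]

/-- Lemma 4 of the paper (with `ζ = 1.3`): the cumulative sum of the tail
probability bounds is bounded by a constant depending only on the degree `d`. -/
theorem tail_sum_bound (ξ : ℝ) (hξ : 1.1 ≤ ξ) (d : ℕ) (T : ℕ) (hT : 1 ≤ T) :
    ∑ t ∈ Finset.Icc 1 (T - 1),
        (1 / Real.log 1.3) *
          (Real.log (((d : ℝ) + 1) * t) /
            (t : ℝ) ^ ((ξ + 1) * (1 - (1.3 - 1) ^ 2 / 16))) ≤
      12 * Real.log (3 * ((d : ℝ) + 1)) + 3 * (Real.log ((d : ℝ) + 1) + 1) :=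
  tail_sum_bound_general ξ hξ d T
end
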